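/- Let W be a d'-dimensional Brownian motion on (Ω,F,P) on [t,T] with W_t = 0, F^{t,0}_s its raw filtration, and fix u ∈ [t,T]. Let P_ω be a regular conditional probability given F^{t,0}_u. For P-a.e. ω, the P_ω-augmentation of the filtration F^{u,0}_s = σ(W_r − W_u : r ∈ [u,s]), s ∈ [u,T], coincides with the P_ω-augmentation of F^{t,0}_s. In particular, for P-a.e. ω, every F^{t,0}_s-measurable set belongs to the P_ω-augmentation of F^{u,0}_s for all s ∈ [u,T]. -/

import Mathlib

/-!
For `P`-a.e. `ω`, the regular conditional probability `Pω ω` makes every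
`F^{t,0}_u`-measurable random variable a.s. equal to its value at `ω` (a countable separating
family of sets reduces this to indicators, whose conditional expectations are themselves).
Applied to `W r` for a countable dense set of `r ∈ [t,u]`, path continuity shows that the whole
path on `[t,u]` is `Pω ω`-a.s. that of `ω`. So `W r` is a.s. constant for `r ≤ u`, and
`W r = (W r - W u) + W u ω` a.s. for `r > u`: the raw σ-algebra lies in the augmented increment
σ-algebra, and the reverse inclusion is clear.
-/

open MeasureTheory Filter Set

noncomputable section

/-- The raw filtration generated by a process `W` on the time interval `[t,s]`. -/
def rawFilt {Ω : Type*} {E : Type*} [MeasurableSpace E] (W : ℝ → Ω → E) (t s : ℝ) :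
    MeasurableSpace Ω :=
  ⨆ u ∈ Set.Icc t s, MeasurableSpace.comap (W u) inferInstance

/-- The filtration generated by the increments of `W` after time `u`. -/
def incrFilt {Ω : Type*} {d' : ℕ} (W : ℝ → Ω → Fin d' → ℝ) (u s : ℝ) :
    MeasurableSpace Ω :=
  ⨆ r ∈ Set.Icc u s, MeasurableSpace.comap (fun ω => W r ω - W u ω) inferInstance

/-- Augmentation of a σ-algebra `m` with the `μ`-null sets. -/
def nullAug {Ω : Type*} (m0 : MeasurableSpace Ω) (μ : @MeasureTheory.Measure Ω m0)
    (m : MeasurableSpace Ω) : MeasurableSpace Ω :=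
  m ⊔ MeasurableSpace.generateFrom {N | ∃ A, MeasurableSet[m0] A ∧ μ A = 0 ∧ N ⊆ A}

section NullAug

variable {Ω : Type*} {m0 m m' : MeasurableSpace Ω} {μ : @Measure Ω m0}

lemma le_nullAug : m ≤ nullAug m0 μ m := le_sup_left

lemma measurableSet_nullAug_of_measure_zero {N : Set Ω} (hN : μ N = 0) :
    MeasurableSet[nullAug m0 μ m] N :=
  le_sup_right (a := m) _ <| MeasurableSpace.measurableSet_generateFrom
    ⟨@toMeasurable Ω m0 μ N, @measurableSet_toMeasurable Ω m0 μ N,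
      by rwa [@measure_toMeasurable Ω m0 μ], @subset_toMeasurable Ω m0 μ N⟩

lemma MeasurableSet.nullAug_of_ae_eq {A C : Set Ω} (hC : MeasurableSet[m] C) (hAC : A =ᵐ[μ] C) :
    MeasurableSet[nullAug m0 μ m] A := by
  simpa only [symmDiff_symmDiff_cancel_right] using
    (measurableSet_nullAug_of_measure_zero (measure_symmDiff_eq_zero_iff.mpr hAC)).symmDiff
      (le_nullAug _ hC)

lemma Measurable.nullAug_of_ae_eq {E : Type*} [MeasurableSpace E] {f g : Ω → E}
    (hf : Measurable[m] f) (hfg : g =ᵐ[μ] f) : Measurable[nullAug m0 μ m] g :=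
  fun _ hV => (hf hV).nullAug_of_ae_eq (hfg.preimage _)

lemma nullAug_eq_of_le_of_le_nullAug (h : m ≤ m') (h' : m' ≤ nullAug m0 μ m) :
    nullAug m0 μ m = nullAug m0 μ m' :=
  le_antisymm (sup_le_sup_right h _) (sup_le h' le_sup_right)

end NullAug

section Filtrations

variable {Ω E : Type*} [MeasurableSpace E]

lemma rawFilt_mono (W : ℝ → Ω → E) {t s s' : ℝ} (h : s ≤ s') :
    rawFilt W t s ≤ rawFilt W t s' :=
  biSup_mono fun _ hr => ⟨hr.1, hr.2.trans h⟩

lemma measurable_rawFilt (W : ℝ → Ω → E) {t s r : ℝ} (hr : r ∈ Icc t s) :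
    Measurable[rawFilt W t s] (W r) :=
  measurable_iff_comap_le.mpr <| le_biSup (fun v => MeasurableSpace.comap (W v) _) hr

variable {d' : ℕ}

lemma measurable_incrFilt (W : ℝ → Ω → Fin d' → ℝ) {u s r : ℝ} (hr : r ∈ Icc u s) :
    Measurable[incrFilt W u s] fun ω => W r ω - W u ω :=
  measurable_iff_comap_le.mpr <|
    le_biSup (fun v => MeasurableSpace.comap (fun ω => W v ω - W u ω) _) hr

lemma incrFilt_le_rawFilt (W : ℝ → Ω → Fin d' → ℝ) {t u s : ℝ} (htu : t ≤ u) :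
    incrFilt W u s ≤ rawFilt W t s :=
  iSup₂_le fun _ hr => measurable_iff_comap_le.mp <|
    (measurable_rawFilt W ⟨htu.trans hr.1, hr.2⟩).sub
      (measurable_rawFilt W ⟨htu, hr.1.trans hr.2⟩)

lemma rawFilt_le_nullAug_incrFilt {m0 : MeasurableSpace Ω} {μ : @Measure Ω m0}
    {W : ℝ → Ω → Fin d' → ℝ} {c : ℝ → Fin d' → ℝ} {t u s : ℝ} (htu : t ≤ u)
    (hc : ∀ᵐ ω ∂μ, EqOn (W · ω) c (Icc t u)) :
    rawFilt W t s ≤ nullAug m0 μ (incrFilt W u s) := by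
  refine iSup₂_le fun r hr => measurable_iff_comap_le.mp ?_
  rcases le_or_gt r u with hru | hur
  · exact measurable_const.nullAug_of_ae_eq (hc.mono fun ω h => h ⟨hr.1, hru⟩)
  · have hW : W r =ᵐ[μ] fun ω => (W r ω - W u ω) + c u :=
      hc.mono fun ω h => by simp only [← h ⟨htu, le_rfl⟩, sub_add_cancel]
    exact ((measurable_incrFilt W ⟨hur.le, hr.2⟩).add_const (c u)).nullAug_of_ae_eq hW

end Filtrations

section RegularConditionalProbability

open TopologicalSpace

variable {Ω : Type*} {m m0 mF : MeasurableSpace Ω} {P : @Measure Ω mF} [IsFiniteMeasure P]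
  {Pω : Ω → @Measure Ω m0}

lemma ae_ae_mem_iff_of_condExp_indicator (hm : m ≤ m0) (hm0 : m0 ≤ mF)
    (hprob : ∀ ω, IsProbabilityMeasure (Pω ω)) {A : Set Ω} (hA : MeasurableSet[m] A)
    (hcond : (fun ω => (Pω ω A).toReal) =ᵐ[P] P[A.indicator (fun _ => (1:ℝ)) | m]) :
    ∀ᵐ ω ∂P, ∀ᵐ ω' ∂(Pω ω), ω' ∈ A ↔ ω ∈ A := by
  have hind : P[A.indicator (fun _ => (1:ℝ)) | m] = A.indicator fun _ => 1 :=
    condExp_of_stronglyMeasurable (hm.trans hm0) (stronglyMeasurable_const.indicator hA)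
      ((integrable_const 1).indicator (hm0 _ (hm _ hA)))
  filter_upwards [hcond] with ω hω
  rw [hind] at hω
  have hA0 : MeasurableSet[m0] A := hm _ hA
  by_cases hωA : ω ∈ A
  · have h1 : Pω ω A = 1 := (ENNReal.toReal_eq_one_iff _).mp (by simpa [hωA] using hω)
    simp only [hωA, iff_true]
    exact mem_ae_iff.mpr ((prob_compl_eq_zero_iff hA0).mpr h1)
  · have h0 : Pω ω A = 0 := ((ENNReal.toReal_eq_zero_iff _).mp
      (by simpa [hωA] using hω)).resolve_right (measure_ne_top _ _)
    simpa only [hωA, iff_false] using measure_eq_zero_iff_ae_notMem.mp h0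

lemma ae_ae_eq_of_measurable {E : Type*} [MeasurableSpace E]
    [MeasurableSpace.CountablySeparated E]
    (hm : m ≤ m0) (hm0 : m0 ≤ mF) (hprob : ∀ ω, IsProbabilityMeasure (Pω ω))
    (hcond : ∀ A : Set Ω, MeasurableSet[m0] A →
      (fun ω => (Pω ω A).toReal) =ᵐ[P] P[A.indicator (fun _ => (1:ℝ)) | m])
    {f : Ω → E} (hf : Measurable[m] f) :
    ∀ᵐ ω ∂P, ∀ᵐ ω' ∂(Pω ω), f ω' = f ω := by
  obtain ⟨S, hSc, hSm, hsep⟩ := exists_countable_separating E MeasurableSet univ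
  have hS : ∀ᵐ ω ∂P, ∀ s ∈ S, ∀ᵐ ω' ∂(Pω ω), f ω' ∈ s ↔ f ω ∈ s :=
    (ae_ball_iff hSc).mpr fun s hs => ae_ae_mem_iff_of_condExp_indicator hm hm0 hprob
      (hf (hSm s hs)) (hcond _ (hm _ (hf (hSm s hs))))
  filter_upwards [hS] with ω hω
  filter_upwards [(ae_ball_iff hSc).mpr hω] with ω' hω'
  exact hsep _ trivial _ trivial hω'

lemma ae_ae_eqOn_of_continuous {ι E : Type*} [TopologicalSpace ι] [PseudoMetrizableSpace ι]
    [TopologicalSpace E] [T2Space E] [MeasurableSpace E] [MeasurableSpace.CountablySeparated E]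
    (hm : m ≤ m0) (hm0 : m0 ≤ mF) (hprob : ∀ ω, IsProbabilityMeasure (Pω ω))
    (hcond : ∀ A : Set Ω, MeasurableSet[m0] A →
      (fun ω => (Pω ω A).toReal) =ᵐ[P] P[A.indicator (fun _ => (1:ℝ)) | m])
    {X : ι → Ω → E} {I : Set ι} (hI : IsSeparable I) (hX : ∀ ω, Continuous (X · ω))
    (hXm : ∀ i ∈ I, Measurable[m] (X i)) :
    ∀ᵐ ω ∂P, ∀ᵐ ω' ∂(Pω ω), EqOn (X · ω') (X · ω) I := by
  obtain ⟨D, hDI, hDc, hID⟩ := hI.exists_countable_dense_subset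
  have hD : ∀ᵐ ω ∂P, ∀ i ∈ D, ∀ᵐ ω' ∂(Pω ω), X i ω' = X i ω :=
    (ae_ball_iff hDc).mpr fun i hi =>
      ae_ae_eq_of_measurable hm hm0 hprob hcond (hXm i (hDI hi))
  filter_upwards [hD] with ω hω
  filter_upwards [(ae_ball_iff hDc).mpr hω] with ω' hω'
  exact (EqOn.closure hω' (hX ω') (hX ω)).mono hID

end RegularConditionalProbability

theorem conditional_augmented_filtrations_coincide_general
    {Ω : Type*} [mF : MeasurableSpace Ω] (P : Measure Ω) [IsProbabilityMeasure P]
    (m0 : MeasurableSpace Ω) (hm0 : m0 ≤ mF)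
    {d' : ℕ} (t u T : ℝ) (htu : t ≤ u) (huT : u ≤ T)
    (W : ℝ → Ω → Fin d' → ℝ)
    (hWc : ∀ ω, Continuous fun s => W s ω)
    (hWm : rawFilt W t T ≤ m0)
    -- `Pω` is a regular conditional probability given `F^{t,0}_u`
    (Pω : Ω → @MeasureTheory.Measure Ω m0)
    (hprob : ∀ ω, IsProbabilityMeasure (Pω ω))
    (hcond : ∀ A : Set Ω, MeasurableSet[m0] A →
      (fun ω => (Pω ω A).toReal) =ᵐ[P] P[A.indicator (fun _ => (1:ℝ)) | rawFilt W t u]) :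
    ∀ᵐ ω ∂P, ∀ s, u ≤ s → s ≤ T →
      nullAug m0 (Pω ω) (incrFilt W u s) = nullAug m0 (Pω ω) (rawFilt W t s) ∧
      ∀ A : Set Ω, MeasurableSet[rawFilt W t s] A →
        MeasurableSet[nullAug m0 (Pω ω) (incrFilt W u s)] A := by
  have hm : rawFilt W t u ≤ m0 := (rawFilt_mono W huT).trans hWm
  filter_upwards [ae_ae_eqOn_of_continuous hm hm0 hprob hcond
    (TopologicalSpace.IsSeparable.of_separableSpace (Icc t u)) hWc
    fun r hr => measurable_rawFilt W hr]
    with ω hω s _ _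
  have hle : rawFilt W t s ≤ nullAug m0 (Pω ω) (incrFilt W u s) :=
    rawFilt_le_nullAug_incrFilt htu hω
  exact ⟨nullAug_eq_of_le_of_le_nullAug (incrFilt_le_rawFilt W htu) hle, hle⟩

/-- let `W` be a continuous process on `[t,T]` with `W_t = 0` (a Brownian
motion), `F^{t,0}` its raw filtration, `u ∈ [t,T]`, and `Pω` a regular conditional
probability given `F^{t,0}_u`. For `P`-a.e. `ω`, the `Pω ω`-augmentation of the
increment filtration `F^{u,0}_s = σ(W_r − W_u : r ∈ [u,s])` coincides with the `Pω ω`-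
augmentation of `F^{t,0}_s`, for all `s ∈ [u,T]`; in particular every `F^{t,0}_s`-set
belongs to the `Pω ω`-augmentation of `F^{u,0}_s`. -/
theorem conditional_augmented_filtrations_coincide
    {Ω : Type*} [mF : MeasurableSpace Ω] (P : Measure Ω) [IsProbabilityMeasure P]
    (m0 : MeasurableSpace Ω) (hm0 : m0 ≤ mF)
    {d' : ℕ} (t u T : ℝ) (htu : t ≤ u) (huT : u ≤ T)
    (W : ℝ → Ω → Fin d' → ℝ)
    (hWc : ∀ ω, Continuous fun s => W s ω) (hW0 : ∀ ω, W t ω = 0)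
    (hWm : rawFilt W t T ≤ m0)
    -- `Pω` is a regular conditional probability given `F^{t,0}_u`
    (Pω : Ω → @MeasureTheory.Measure Ω m0)
    (hprob : ∀ ω, IsProbabilityMeasure (Pω ω))
    (hmeas : ∀ A : Set Ω, MeasurableSet[m0] A →
      Measurable[rawFilt W t u] fun ω => Pω ω A)
    (hcond : ∀ A : Set Ω, MeasurableSet[m0] A →
      (fun ω => (Pω ω A).toReal) =ᵐ[P] P[A.indicator (fun _ => (1:ℝ)) | rawFilt W t u]) :
    ∀ᵐ ω ∂P, ∀ s, u ≤ s → s ≤ T →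
      nullAug m0 (Pω ω) (incrFilt W u s) = nullAug m0 (Pω ω) (rawFilt W t s) ∧
      ∀ A : Set Ω, MeasurableSet[rawFilt W t s] A →
        MeasurableSet[nullAug m0 (Pω ω) (incrFilt W u s)] A :=
  conditional_augmented_filtrations_coincide_general (mF := mF) P m0 hm0 t u T htu huT W hWc hWm Pω
    hprob hcond

end
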